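/- Let X be a finite set of points in ℙ²_k in uniform position and X′ ⊆ X a subset with h¹(I_{X′}(l)) ≠ 0. Then h⁰(I_X(l)) = h⁰(I_{X′}(l)); in particular every curve of degree l containing X′ contains X. -/

import Mathlib

open MvPolynomial

/-- Evaluation of degree-`l` homogeneous forms on `ℙ²` (given by representatives in `k³`)
at the points of a finite set `X`. -/
noncomputable def evalMapP2 (k : Type) [Field k] (X : Finset (Fin 3 → k)) (l : ℕ) :
    (homogeneousSubmodule (Fin 3) k l) →ₗ[k] (X → k) where
  toFun f x := eval (x : Fin 3 → k) f.1
  map_add' f g := by funext x; simp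
  map_smul' c f := by funext x; simp

/-- The Hilbert function of a finite set of points of `ℙ²` (given by representatives in `k³`):
`H(X, l)` is the rank of the evaluation map `H⁰(𝒪_{ℙ²}(l)) → H⁰(𝒪_X(l)) = k^X`. -/
noncomputable def hilbertFunction (k : Type) [Field k] (X : Finset (Fin 3 → k)) (l : ℕ) : ℕ :=
  Module.finrank k (LinearMap.range (evalMapP2 k X l))

/-- `h⁰(ℙ², I_X(l))`: the dimension of the space of degree-`l` forms vanishing on `X`. -/
noncomputable def h0IdealSheaf (k : Type) [Field k] (X : Finset (Fin 3 → k)) (l : ℕ) : ℕ :=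
  Module.finrank k (LinearMap.ker (evalMapP2 k X l))

/-- `h¹(ℙ², I_X(l)) = deg X - H(X, l)`, from the exact sequence
`0 → H⁰(I_X(l)) → H⁰(𝒪(l)) → H⁰(𝒪_X(l)) → H¹(I_X(l)) → H¹(𝒪(l)) = 0`. -/
noncomputable def h1IdealSheaf (k : Type) [Field k] (X : Finset (Fin 3 → k)) (l : ℕ) : ℕ :=
  X.card - hilbertFunction k X l

/-- The representatives in `X ⊆ k³` give pairwise distinct points of `ℙ²`. -/
def ProjDistinct (k : Type) [Field k] (X : Finset (Fin 3 → k)) : Prop :=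
  (∀ x ∈ X, x ≠ 0) ∧ ∀ x ∈ X, ∀ y ∈ X, x ≠ y → ∀ c : k, x ≠ c • y

/-- `X` has the Uniform Position Property: any two subsets of the same cardinality
have the same Hilbert function. -/
def UniformPosition (k : Type) [Field k] (X : Finset (Fin 3 → k)) : Prop :=
  ∀ Z₁ Z₂ : Finset (Fin 3 → k), Z₁ ⊆ X → Z₂ ⊆ X → Z₁.card = Z₂.card →
    ∀ i, hilbertFunction k Z₁ i = hilbertFunction k Z₂ i

open Finset

section HilbertFunction

variable {k : Type} [Field k] {l : ℕ}

instance : FiniteDimensional k (homogeneousSubmodule (Fin 3) k l) :=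
  Module.Finite.iff_fg.mpr (homogeneousSubmodule_fg _ _ l)

lemma mem_ker_evalMapP2 {Z : Finset (Fin 3 → k)} {f : homogeneousSubmodule (Fin 3) k l} :
    f ∈ LinearMap.ker (evalMapP2 k Z l) ↔ ∀ x ∈ Z, eval x f.1 = 0 := by
  simp [funext_iff, evalMapP2]

lemma ker_evalMapP2_anti {Z W : Finset (Fin 3 → k)} (h : W ⊆ Z) :
    LinearMap.ker (evalMapP2 k Z l) ≤ LinearMap.ker (evalMapP2 k W l) := fun _ hf =>
  mem_ker_evalMapP2.2 fun x hx => mem_ker_evalMapP2.1 hf x (h hx)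

lemma hilbertFunction_add_h0IdealSheaf (Z : Finset (Fin 3 → k)) (l : ℕ) :
    hilbertFunction k Z l + h0IdealSheaf k Z l =
      Module.finrank k (homogeneousSubmodule (Fin 3) k l) :=
  LinearMap.finrank_range_add_finrank_ker _

/-- A form through all points of `Z` but `y` and not through `y` evaluates to a multiple of
the indicator of `y`, so if every point has such a separator the evaluation map is onto. -/
lemma hilbertFunction_eq_card_of_separated [DecidableEq (Fin 3 → k)] (Z : Finset (Fin 3 → k))
    (hsep : ∀ y ∈ Z, ∃ f ∈ LinearMap.ker (evalMapP2 k (Z.erase y) l), eval y f.1 ≠ 0) :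
    hilbertFunction k Z l = Z.card := by
  have hsingle : ∀ y : Z, Pi.single y 1 ∈ LinearMap.range (evalMapP2 k Z l) := by
    intro y
    obtain ⟨f, hf, hfy⟩ := hsep y y.2
    have hvan := mem_ker_evalMapP2.1 hf
    have heval : evalMapP2 k Z l f = eval y.1 f.1 • Pi.single y 1 := by
      funext z
      by_cases hzy : z = y
      · subst hzy; simp [evalMapP2]
      · have hz : z.1 ∈ Z.erase y := mem_erase.2 ⟨fun h => hzy (Subtype.ext h), z.2⟩
        simp [evalMapP2, hvan z.1 hz, Pi.single_eq_of_ne hzy]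
    have : Pi.single y 1 = (eval y.1 f.1)⁻¹ • evalMapP2 k Z l f := by
      rw [heval, smul_smul, inv_mul_cancel₀ hfy, one_smul]
    exact this ▸ Submodule.smul_mem _ _ (LinearMap.mem_range_self _ f)
  have htop : LinearMap.range (evalMapP2 k Z l) = ⊤ := by
    rw [eq_top_iff, ← (Pi.basisFun k Z).span_eq, Submodule.span_le]
    rintro _ ⟨y, rfl⟩
    simpa using hsingle y
  rw [hilbertFunction, htop, finrank_top, Module.finrank_pi, Fintype.card_coe]

lemma exists_hilbertFunction_erase_eq [DecidableEq (Fin 3 → k)] (Z : Finset (Fin 3 → k))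
    (h : hilbertFunction k Z l < Z.card) :
    ∃ y ∈ Z, hilbertFunction k (Z.erase y) l = hilbertFunction k Z l := by
  by_contra! hne
  refine h.ne (hilbertFunction_eq_card_of_separated Z fun y hy => ?_)
  by_contra! hnosep
  have hker : LinearMap.ker (evalMapP2 k (Z.erase y) l) = LinearMap.ker (evalMapP2 k Z l) := by
    refine le_antisymm (fun f hf => mem_ker_evalMapP2.2 fun x hx => ?_)
      (ker_evalMapP2_anti (erase_subset y Z))
    by_cases hxy : x = y
    · exact hxy ▸ hnosep f hf
    · exact mem_ker_evalMapP2.1 hf x (mem_erase.2 ⟨hxy, hx⟩)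
  have h0eq : h0IdealSheaf k (Z.erase y) l = h0IdealSheaf k Z l := by
    rw [h0IdealSheaf, h0IdealSheaf, hker]
  have := hilbertFunction_add_h0IdealSheaf (Z.erase y) l
  have := hilbertFunction_add_h0IdealSheaf Z l
  exact hne y hy (by omega)

lemma hilbertFunction_lt_insert [DecidableEq (Fin 3 → k)] {W : Finset (Fin 3 → k)}
    {x : Fin 3 → k} {f : homogeneousSubmodule (Fin 3) k l}
    (hW : f ∈ LinearMap.ker (evalMapP2 k W l)) (hx : eval x f.1 ≠ 0) :
    hilbertFunction k W l < hilbertFunction k (insert x W) l := by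
  have hlt : LinearMap.ker (evalMapP2 k (insert x W) l) < LinearMap.ker (evalMapP2 k W l) :=
    lt_of_le_of_ne (ker_evalMapP2_anti (subset_insert x W)) fun h =>
      hx (mem_ker_evalMapP2.1 (h ▸ hW) x (mem_insert_self x W))
  have : h0IdealSheaf k (insert x W) l < h0IdealSheaf k W l :=
    Submodule.finrank_lt_finrank_of_lt hlt
  have := hilbertFunction_add_h0IdealSheaf W l
  have := hilbertFunction_add_h0IdealSheaf (insert x W) l
  omega

end HilbertFunction

/-- Trading a point `y` of `X'` that imposes no condition in degree `l` for a point of `X` off a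
degree-`l` curve through `X'` keeps the cardinality but raises the Hilbert function,
contradicting uniform position. -/
theorem UniformPosition.eval_eq_zero_of_h1IdealSheaf_ne_zero {k : Type} [Field k]
    {X X' : Finset (Fin 3 → k)} (hupp : UniformPosition k X) (hsub : X' ⊆ X) {l : ℕ}
    (hone : h1IdealSheaf k X' l ≠ 0) (f : MvPolynomial (Fin 3) k)
    (hf : f ∈ homogeneousSubmodule (Fin 3) k l) (hX' : ∀ x ∈ X', eval x f = 0) :
    ∀ x ∈ X, eval x f = 0 := by
  classical
  intro x hx
  by_contra hxf
  have hlt : hilbertFunction k X' l < X'.card := by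
    rw [h1IdealSheaf] at hone
    omega
  obtain ⟨y, hy, hye⟩ := exists_hilbertFunction_erase_eq X' hlt
  have hxX' : x ∉ X' := fun h => hxf (hX' x h)
  have hcard : (insert x (X'.erase y)).card = X'.card := by
    rw [card_insert_of_notMem fun h => hxX' (mem_of_mem_erase h), card_erase_add_one hy]
  have hupp' := hupp _ X' (insert_subset hx ((erase_subset y X').trans hsub)) hsub hcard l
  have hraise := hilbertFunction_lt_insert (W := X'.erase y) (f := ⟨f, hf⟩)
    (mem_ker_evalMapP2.2 fun w hw => hX' w (mem_of_mem_erase hw)) hxf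
  omega

open MvPolynomial in
theorem stmt8_general (k : Type) [Field k] (X X' : Finset (Fin 3 → k))
    (hupp : UniformPosition k X)
    (hsub : X' ⊆ X) (l : ℕ) (hone : h1IdealSheaf k X' l ≠ 0) :
    h0IdealSheaf k X l = h0IdealSheaf k X' l ∧
      ∀ f ∈ homogeneousSubmodule (Fin 3) k l,
        (∀ x ∈ X', eval x f = 0) → ∀ x ∈ X, eval x f = 0 := by
  have hcontains := hupp.eval_eq_zero_of_h1IdealSheaf_ne_zero hsub hone
  have hker : LinearMap.ker (evalMapP2 k X l) = LinearMap.ker (evalMapP2 k X' l) :=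
    le_antisymm (ker_evalMapP2_anti hsub) fun f hf =>
      mem_ker_evalMapP2.2 (hcontains f.1 f.2 (mem_ker_evalMapP2.1 hf))
  exact ⟨by rw [h0IdealSheaf, h0IdealSheaf, hker], hcontains⟩

open MvPolynomial in
/-- If `X ⊆ ℙ²` is in uniform position and `X' ⊆ X` satisfies `h¹(I_{X'}(l)) ≠ 0`, then
`h⁰(I_X(l)) = h⁰(I_{X'}(l))`; in particular every curve of degree `l` containing `X'`
contains `X`. -/
theorem stmt8 (k : Type) [Field k] [IsAlgClosed k] (X X' : Finset (Fin 3 → k))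
    (hdist : ProjDistinct k X) (hupp : UniformPosition k X)
    (hsub : X' ⊆ X) (l : ℕ) (hone : h1IdealSheaf k X' l ≠ 0) :
    h0IdealSheaf k X l = h0IdealSheaf k X' l ∧
      ∀ f ∈ homogeneousSubmodule (Fin 3) k l,
        (∀ x ∈ X', eval x f = 0) → ∀ x ∈ X, eval x f = 0 :=
  stmt8_general k X X' hupp hsub l hone
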